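/- arXiv:2103.06760 — 2 statements merged into one kernel-verified Lean document; each statement's English description precedes it below -/
import Mathlib

section
/- Let G be a 2-tough 2K_2-free graph with a minimum-component 2-factor F having more than one cycle. Then every set of co-absorbable vertices is independent in G. -/
open SimpleGraph

/-- A set of vertices is independent: no two of its members are adjacent. -/
def IsIndepSet {V : Type*} (G : SimpleGraph V) (s : Set V) : Prop :=
  ∀ x ∈ s, ∀ y ∈ s, ¬ G.Adj x y

/-- `G` contains no induced `2K₂`: there are no two disjoint edges with no
edge of `G` between them. -/
def TwoK2Free {V : Type*} (G : SimpleGraph V) : Prop :=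
  ¬ ∃ a b c d : V, G.Adj a b ∧ G.Adj c d ∧ a ≠ c ∧ a ≠ d ∧ b ≠ c ∧ b ≠ d ∧
    ¬ G.Adj a c ∧ ¬ G.Adj a d ∧ ¬ G.Adj b c ∧ ¬ G.Adj b d

/-- The independence number of `G`. -/
noncomputable def indepNum {V : Type*} [Fintype V] (G : SimpleGraph V) : ℕ :=
  sSup {n | ∃ s : Finset V, _root_.IsIndepSet G ↑s ∧ s.card = n}

/-- The number of connected components of a graph. -/
noncomputable def compCount {W : Type*} (H : SimpleGraph W) : ℕ :=
  Nat.card H.ConnectedComponent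

/-- `G` is `t`-tough: whenever removing a vertex set `S` disconnects the rest
into more than one component, `|S| ≥ t · ω(G − S)`. -/
def Tough {V : Type*} [Fintype V] (t : ℝ) (G : SimpleGraph V) : Prop :=
  ∀ S : Finset V,
    1 < compCount (G.induce ((↑S : Set V)ᶜ)) →
    t * compCount (G.induce ((↑S : Set V)ᶜ)) ≤ S.card

/-- An (oriented) `2`-factor of `G`, encoded as a permutation `σ` of the
vertices: each vertex is adjacent to its successor `σ x`, and every cycle of
`σ` has length at least `3`.  The cycles of `σ` are exactly the cycles of the
`2`-factor, with a fixed orientation; the successor of `x` is `σ x` and its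
predecessor is `σ⁻¹ x`. -/
def IsTwoFactor {V : Type*} (G : SimpleGraph V) (σ : Equiv.Perm V) : Prop :=
  ∀ x : V, G.Adj x (σ x) ∧ σ (σ x) ≠ x

/-- The number of components (cycles) of a `2`-factor encoded as a permutation. -/
noncomputable def numCycles {V : Type*} [Fintype V] (σ : Equiv.Perm V) : ℕ :=
  (@Equiv.Perm.cycleType V _ (Classical.decEq V) σ).card

/-- `σ` is a `2`-factor of `G` with the minimum number of components. -/
def IsMinTwoFactor {V : Type*} [Fintype V] (G : SimpleGraph V) (σ : Equiv.Perm V) : Prop :=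
  IsTwoFactor G σ ∧ ∀ τ : Equiv.Perm V, IsTwoFactor G τ → numCycles σ ≤ numCycles τ

/-- An (oriented) `2`-factor of `G − x`, encoded as a permutation of `V`
fixing `x`. -/
def IsTwoFactorAvoiding {V : Type*} (G : SimpleGraph V) (x : V) (σ' : Equiv.Perm V) : Prop :=
  σ' x = x ∧ ∀ y : V, y ≠ x → G.Adj y (σ' y) ∧ σ' (σ' y) ≠ y

/-- `x` is co-absorbable w.r.t. the `2`-factor `σ`: `G − x` has a `2`-factor
with strictly fewer components than `σ`. -/
def CoAbsorbable {V : Type*} [Fintype V] (G : SimpleGraph V) (σ : Equiv.Perm V) (x : V) : Prop :=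
  ∃ σ' : Equiv.Perm V, IsTwoFactorAvoiding G x σ' ∧ numCycles σ' < numCycles σ

/-- `x` is of `A`-type w.r.t. the `2`-factor `σ`: some other cycle of `σ`
contains two consecutive vertices `z`, `σ z` both adjacent to `x`. -/
def AType {V : Type*} (G : SimpleGraph V) (σ : Equiv.Perm V) (x : V) : Prop :=
  ∃ z : V, ¬ σ.SameCycle x z ∧ G.Adj x z ∧ G.Adj x (σ z)

/-- The degree of a vertex. -/
noncomputable def vdeg {V : Type*} (G : SimpleGraph V) (x : V) : ℕ :=
  Nat.card (G.neighborSet x)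

/-! A co-absorbable vertex `x` comes with a 2-factor `σ'` of `G - x` having fewer cycles than any
2-factor of `G`. Then `{x} ∪ σ'(N(x))` is independent: an edge inside it would let us splice `x`
into `σ'` (inserting it into a cycle, merging two cycles through it, or rerouting one cycle
through it) and obtain a 2-factor of `G` with no more cycles than `σ'`. Hence `deg x < α(G)`.
If two co-absorbable vertices `x, y` were adjacent, 2K₂-freeness would make the vertices
adjacent to neither of them independent, so `n ≤ α + deg x + deg y ≤ 3α - 2`; but 2-toughness,
applied to the complement of a maximum independent set, gives `3α ≤ n`. -/

namespace Equiv.Perm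

variable {α : Type*} {f g c e : Perm α} {s : Set α} {a b u v : α}

theorem SameCycle.mem_of_mapsTo [Finite α] (hs : Set.MapsTo f s s) (h : f.SameCycle u v)
    (hu : u ∈ s) : v ∈ s := by
  obtain ⟨n, -, rfl⟩ := h.exists_pow_eq'
  clear h
  induction n with
  | zero => exact hu
  | succ n ih => rw [pow_succ', mul_apply]; exact hs ih

theorem mapsTo_mul_swap [DecidableEq α] (hs : Set.MapsTo f s s) (ha : a ∈ s) (hb : b ∈ s) :
    Set.MapsTo (f * swap a b) s s := fun u hu => by
  rw [mul_apply]
  apply hs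
  rw [swap_apply_def]
  split_ifs <;> assumption

theorem not_sameCycle_mul_swap [Finite α] [DecidableEq α] (h : f.SameCycle a b) (hab : a ≠ b) :
    ¬ (f * swap a b).SameCycle a b := by
  classical
  have hex : ∃ m, 0 < m ∧ (f ^ m) b = a := by
    obtain ⟨m, hm, -, hma⟩ := h.symm.exists_pow_eq''
    exact ⟨m, hm, hma⟩
  obtain ⟨hN, hNa⟩ := Nat.find_spec hex
  set N := Nat.find hex
  have hne_a : ∀ j, 0 < j → j < N → (f ^ j) b ≠ a := fun j hj hjN h =>
    Nat.find_min hex hjN ⟨hj, h⟩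
  have hne_b : ∀ j, 0 < j → j < N → (f ^ j) b ≠ b := fun j hj hjN h =>
    hne_a (N - j) (by omega) (by omega) <|
      calc (f ^ (N - j)) b = (f ^ (N - j) * f ^ j) b := by rw [mul_apply, h]
        _ = a := by rw [← pow_add, Nat.sub_add_cancel hjN.le, hNa]
  -- the orbit of `a` under `f * swap a b` is the `f`-path `f b, f² b, …, a`
  set S := {u | ∃ j, 0 < j ∧ j ≤ N ∧ (f ^ j) b = u}
  have hS : Set.MapsTo (f * swap a b) S S := by
    rintro _ ⟨j, hj, hjN, rfl⟩
    rcases hjN.lt_or_eq with hjN | rfl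
    · refine ⟨j + 1, by omega, hjN, ?_⟩
      rw [mul_apply, swap_apply_of_ne_of_ne (hne_a j hj hjN) (hne_b j hj hjN), pow_succ',
        mul_apply]
    · exact ⟨1, one_pos, hN, by rw [mul_apply, hNa, swap_apply_left, pow_one]⟩
  rintro hab'
  obtain ⟨j, hj, hjN, hjb⟩ := hab'.mem_of_mapsTo hS ⟨N, hN, le_rfl, hNa⟩
  rcases hjN.lt_or_eq with hjN | rfl
  · exact hne_b j hj hjN hjb
  · exact hab (hNa.symm.trans hjb)

theorem SameCycle.sameCycle_mul_swap_or_iff [Finite α] [DecidableEq α] (h : f.SameCycle a b) :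
    (f * swap a b).SameCycle a u ∨ (f * swap a b).SameCycle b u ↔ f.SameCycle a u := by
  set C := {u | f.SameCycle a u}
  set D := {u | (f * swap a b).SameCycle a u ∨ (f * swap a b).SameCycle b u}
  have hC : Set.MapsTo (f * swap a b) C C :=
    mapsTo_mul_swap (fun _ hv => hv.apply_right) (SameCycle.refl _ _) h
  have hD : Set.MapsTo f D D := by
    simpa only [mul_swap_mul_self] using mapsTo_mul_swap (f := f * swap a b) (s := D)
      (fun _ hv => hv.imp SameCycle.apply_right SameCycle.apply_right)
      (.inl (SameCycle.refl _ _)) (.inr (SameCycle.refl _ _))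
  refine ⟨fun h' => show u ∈ C from ?_,
    fun h' => show u ∈ D from h'.mem_of_mapsTo hD (.inl (SameCycle.refl _ _))⟩
  rcases h' with h' | h'
  · exact h'.mem_of_mapsTo hC (SameCycle.refl _ _)
  · exact h'.mem_of_mapsTo hC h

theorem IsCycle.sameCycle_of_forall_apply_eq [Finite α] (hc : c.IsCycle) {p : α} (hp : c p ≠ p)
    (hg : ∀ u, c u ≠ u → u ≠ p → g u = c u) (hu : c u ≠ u) : g.SameCycle (c p) u := by
  have hcp : c (c p) ≠ c p := fun h => hp (c.injective h)
  obtain ⟨n, hn, rfl⟩ := (hc.sameCycle hcp hu).exists_pow_eq'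
  have key : ∀ k ≤ n, (g ^ k) (c p) = (c ^ k) (c p) := by
    intro k hk
    induction k with
    | zero => rfl
    | succ k ih =>
      rw [pow_succ', mul_apply, ih (by omega), pow_succ' c, mul_apply]
      apply hg
      · rw [← mul_apply, ← pow_succ', pow_succ, mul_apply]
        exact fun h => hcp ((c ^ k).injective h)
      · intro h
        have : c ^ (k + 1) = 1 := (hc.pow_eq_one_iff' hp).2 (by rw [pow_succ, mul_apply, h])
        exact absurd (orderOf_le_of_pow_eq_one (by omega) this) (by omega)
  exact ⟨n, by rw [zpow_natCast, key n le_rfl]⟩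

variable [Fintype α] [DecidableEq α]

theorem IsCycle.mul_swap_of_apply_eq_self (hc : c.IsCycle) (ha : c a = a) (hb : c b ≠ b) :
    (c * swap a b).IsCycle ∧ (c * swap a b).support = insert a c.support := by
  have hab : a ≠ b := fun h => hb (h ▸ ha)
  have hga : (c * swap a b) a = c b := by rw [mul_apply, swap_apply_left]
  have hgb : (c * swap a b) b = a := by rw [mul_apply, swap_apply_right, ha]
  have hcba : c b ≠ a := fun h => hab (c.injective (by rw [ha, h]))
  have hsupp : (c * swap a b).support = insert a c.support := by
    ext u
    rw [Finset.mem_insert, mem_support, mem_support]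
    by_cases hua : u = a
    · rw [hua, hga]; exact iff_of_true hcba (Or.inl rfl)
    by_cases hub : u = b
    · rw [hub, hgb]; exact iff_of_true hab (Or.inr hb)
    rw [mul_apply, swap_apply_of_ne_of_ne hua hub]
    exact ⟨Or.inr, fun h => h.resolve_left hua⟩
  refine ⟨⟨a, by rw [hga]; exact hcba, fun y hy => ?_⟩, hsupp⟩
  rw [← mem_support, hsupp, Finset.mem_insert, mem_support] at hy
  rcases hy with rfl | hy
  · exact SameCycle.refl _ _
  refine (SameCycle.refl _ a).apply_right.trans (hga ▸ hc.sameCycle_of_forall_apply_eq hb ?_ hy)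
  intro u hu hub
  rw [mul_apply, swap_apply_of_ne_of_ne (fun h => hu (by rw [h, ha])) hub]

theorem IsCycle.mul_mul_swap (hc : c.IsCycle) (he : e.IsCycle) (hce : c.Disjoint e)
    (ha : c a ≠ a) (hb : e b ≠ b) :
    (c * e * swap a b).IsCycle ∧ (c * e * swap a b).support = c.support ∪ e.support := by
  have hea : e a = a := (hce a).resolve_left ha
  have hcb : c b = b := (hce b).resolve_right hb
  have hceb : c (e b) = e b := (hce (e b)).resolve_right fun h => hb (e.injective h)
  have heca : e (c a) = c a := (hce (c a)).resolve_left fun h => ha (c.injective h)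
  have hab : a ≠ b := fun h => ha (h ▸ hcb)
  have hga : (c * e * swap a b) a = e b := by rw [mul_apply, swap_apply_left, mul_apply, hceb]
  have hgb : (c * e * swap a b) b = c a := by rw [mul_apply, swap_apply_right, mul_apply, hea]
  have hgu : ∀ u, u ≠ a → u ≠ b → (c * e * swap a b) u = c (e u) := fun u hua hub => by
    rw [mul_apply, swap_apply_of_ne_of_ne hua hub, mul_apply]
  have heba : e b ≠ a := fun h => ha (by rw [← h, hceb, h])
  have hcab : c a ≠ b := fun h => hb (by rw [← h, heca, h])
  have hsupp : (c * e * swap a b).support = c.support ∪ e.support := by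
    rw [← hce.support_mul]
    ext u
    rw [mem_support, mem_support]
    by_cases hua : u = a
    · rw [hua, hga, mul_apply, hea]; exact iff_of_true heba ha
    by_cases hub : u = b
    · rw [hub, hgb, mul_apply, hceb]; exact iff_of_true hcab hb
    rw [hgu u hua hub, mul_apply]
  have hreach_e : ∀ y, e y ≠ y → (c * e * swap a b).SameCycle a y := fun y hy =>
    (SameCycle.refl _ a).apply_right.trans <| hga ▸ he.sameCycle_of_forall_apply_eq hb
      (fun u hu hub => by
        rw [hgu u (fun h => hu (h ▸ hea)) hub]
        exact (hce (e u)).resolve_right fun h => hu (e.injective h)) hy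
  refine ⟨⟨a, by rw [hga]; exact heba, fun y hy => ?_⟩, hsupp⟩
  rw [← mem_support, hsupp, Finset.mem_union, mem_support, mem_support] at hy
  rcases hy with hy | hy
  · refine ((hreach_e b hb).trans (SameCycle.refl _ b).apply_right).trans
      (hgb ▸ hc.sameCycle_of_forall_apply_eq ha (fun u hu hua => ?_) hy)
    rw [hgu u hua (fun h => hu (h ▸ hcb)), (hce u).resolve_left hu]
  · exact hreach_e y hy

theorem disjoint_cycleOf_of_not_sameCycle (h : ¬f.SameCycle a b) :
    (f.cycleOf a).Disjoint (f.cycleOf b) := by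
  refine disjoint_iff_disjoint_support.2 (Finset.disjoint_left.2 fun u hu hu' => h ?_)
  exact (mem_support_cycleOf_iff.1 hu).1.trans (mem_support_cycleOf_iff.1 hu').1.symm

theorem mul_inv_apply_of_mem_cycleFactorsFinset (hf : f ∈ g.cycleFactorsFinset) (u : α) :
    (g * f⁻¹) u = if u ∈ f.support then u else g u := by
  rw [mul_apply]
  split_ifs with hu
  · have hu' : f⁻¹ u ∈ f.support := by rwa [← support_inv, apply_mem_support, support_inv]
    rw [← (mem_cycleFactorsFinset_iff.1 hf).2 _ hu', coe_inv, apply_symm_apply]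
  · rw [notMem_support] at hu
    rw [inv_eq_iff_eq.2 hu.symm]

theorem card_cycleType_mul_inv_of_mem_cycleFactorsFinset (hf : f ∈ g.cycleFactorsFinset) :
    Multiset.card (g * f⁻¹).cycleType + 1 = Multiset.card g.cycleType := by
  have hle := cycleType_le_of_mem_cycleFactorsFinset hf
  rw [(mem_cycleFactorsFinset_iff.1 hf).1.cycleType, Multiset.singleton_le] at hle
  rw [cycleType_mul_inv_mem_cycleFactorsFinset_eq_sub hf,
    (mem_cycleFactorsFinset_iff.1 hf).1.cycleType, Multiset.sub_singleton,
    Multiset.card_erase_add_one hle]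

theorem card_cycleType_mul_of_isCycle (hc : c.IsCycle) (hcf : c.Disjoint f) :
    Multiset.card (c * f).cycleType = Multiset.card f.cycleType + 1 := by
  rw [hcf.cycleType_mul, hc.cycleType, Multiset.card_add, Multiset.card_singleton, add_comm]

end Equiv.Perm

open Equiv Equiv.Perm Finset

theorem numCycles_eq_card_cycleType {V : Type*} [Fintype V] [DecidableEq V] (σ : Perm V) :
    numCycles σ = Multiset.card σ.cycleType := by
  unfold numCycles
  congr

section TwoFactor

variable {V : Type*} {G : SimpleGraph V} {σ σ' d r : Perm V} {x u v : V}

theorem IsTwoFactorAvoiding.apply_ne_self (hσ' : IsTwoFactorAvoiding G x σ') (hu : u ≠ x) :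
    σ' u ≠ u :=
  fun h => (hσ'.2 u hu).1.ne h.symm

theorem IsTwoFactorAvoiding.adj_of_apply_eq (hσ' : IsTwoFactorAvoiding G x σ') (huv : u ≠ v)
    (h : σ' u = v) : G.Adj u v := by
  have hux : u ≠ x := by
    rintro rfl
    exact huv (hσ'.1 ▸ h)
  exact h ▸ (hσ'.2 u hux).1

theorem IsTwoFactorAvoiding.not_sameCycle (hσ' : IsTwoFactorAvoiding G x σ') (hu : u ≠ x) :
    ¬σ'.SameCycle u x :=
  fun h => hu (h.eq_of_right hσ'.1)

variable [Fintype V] [DecidableEq V]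

theorem IsTwoFactorAvoiding.cycleOf_mem_cycleFactorsFinset (hσ' : IsTwoFactorAvoiding G x σ')
    (hu : u ≠ x) : σ'.cycleOf u ∈ σ'.cycleFactorsFinset :=
  cycleOf_mem_cycleFactorsFinset_iff.2 (Perm.mem_support.2 (hσ'.apply_ne_self hu))

theorem IsTwoFactorAvoiding.adj_cycleOf_apply (hσ' : IsTwoFactorAvoiding G x σ') {π : Perm V}
    (hu : u ∈ (π.cycleOf v).support) (hπ : π u = σ' u) : G.Adj u (π.cycleOf v u) := by
  have hmoved := Perm.mem_support.1 hu
  rw [(mem_support_cycleOf_iff.1 hu).1.cycleOf_apply, hπ] at hmoved ⊢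
  exact hσ'.adj_of_apply_eq hmoved.symm rfl

theorem adj_inv_apply_of_adj_apply {P : Perm V} {p : V}
    (hP : ∀ u ∈ P.support, u ≠ p → G.Adj u (P u)) (hu : u ∈ P.support) (hup : u ≠ P p) :
    G.Adj u (P⁻¹ u) := by
  have hv : P (P⁻¹ u) = u := (inv_eq_iff_eq.1 rfl).symm
  have hvS : P⁻¹ u ∈ P.support := by rwa [← support_inv, apply_mem_support, support_inv]
  have := hP _ hvS fun h => hup (by rw [← hv, h])
  rw [hv] at this
  exact this.symm

theorem IsTwoFactorAvoiding.isTwoFactor_mul (hσ' : IsTwoFactorAvoiding G x σ')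
    (hd : d.IsCycle) (hdr : d.Disjoint r) (hx : d x ≠ x) (h3 : 2 < #d.support)
    (hr : ∀ u, d u = u → r u = σ' u) (hadj : ∀ u ∈ d.support, G.Adj u (d u)) :
    IsTwoFactor G (d * r) := by
  have hout : ∀ u, d u = u → (d * r) u = σ' u ∧ d (σ' u) = σ' u := fun u hu => by
    have hdσ' : d (σ' u) = σ' u := by
      by_contra h
      refine hσ'.apply_ne_self (fun hux => hx (hux ▸ hu)) (r.injective ?_)
      rw [(hdr _).resolve_left h, hr u hu]
    exact ⟨by rw [mul_apply, hr u hu, hdσ'], hdσ'⟩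
  have hin : ∀ u, d u ≠ u → (d * r) u = d u := fun u hu => by
    rw [mul_apply, (hdr u).resolve_left hu]
  intro u
  by_cases hu : d u = u
  · obtain ⟨h1, h2⟩ := hout u hu
    rw [h1, (hout _ h2).1]
    exact hσ'.2 u fun hux => hx (hux ▸ hu)
  · have hdu : d (d u) ≠ d u := fun h => hu (d.injective h)
    rw [hin u hu, hin _ hdu]
    refine ⟨hadj u (Perm.mem_support.2 hu), fun h => ?_⟩
    rw [hd.eq_swap_of_apply_apply_eq_self hu h, card_support_swap (Ne.symm hu)] at h3
    omega

theorem IsMinTwoFactor.numCycles_le_of_isCycle (hσ : IsMinTwoFactor G σ)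
    (hσ' : IsTwoFactorAvoiding G x σ') {S : Finset V} (hd : d.IsCycle)
    (hS : d.support = insert x S) (hxS : x ∉ S) (h2 : 2 ≤ #S)
    (hr : ∀ u, r u = if u ∈ S then u else σ' u) (hadj : ∀ u ∈ d.support, G.Adj u (d u)) :
    numCycles σ ≤ numCycles r + 1 := by
  have hdr : d.Disjoint r := fun u => by
    by_cases hu : d u = u
    · exact .inl hu
    rw [← Ne, ← Perm.mem_support, hS, mem_insert] at hu
    refine .inr ?_
    rcases hu with rfl | hu
    · rw [hr, if_neg hxS, hσ'.1]
    · rw [hr, if_pos hu]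
  have hx : d x ≠ x := Perm.mem_support.1 (hS ▸ mem_insert_self x S)
  have h3 : 2 < #d.support := by rw [hS, card_insert_of_notMem hxS]; omega
  have hr' : ∀ u, d u = u → r u = σ' u := fun u hu => by
    rw [← Perm.notMem_support, hS, mem_insert, not_or] at hu
    rw [hr, if_neg hu.2]
  calc numCycles σ ≤ numCycles (d * r) := hσ.2 _ (hσ'.isTwoFactor_mul hd hdr hx h3 hr' hadj)
    _ = numCycles r + 1 := by
      simp only [numCycles_eq_card_cycleType, card_cycleType_mul_of_isCycle hd hdr]

theorem IsMinTwoFactor.not_adj_apply_of_adj (hσ : IsMinTwoFactor G σ)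
    (hσ' : IsTwoFactorAvoiding G x σ') (hlt : numCycles σ' < numCycles σ) {z : V}
    (hz : G.Adj x z) : ¬G.Adj x (σ' z) := by
  intro hz'
  have hzx : z ≠ x := hz.ne.symm
  have hc := hσ'.cycleOf_mem_cycleFactorsFinset hzx
  have hcyc := (mem_cycleFactorsFinset_iff.1 hc).1
  have hcx : σ'.cycleOf z x = x := cycleOf_apply_of_not_sameCycle (hσ'.not_sameCycle hzx)
  have hcz : σ'.cycleOf z z = σ' z := cycleOf_apply_self σ' z
  obtain ⟨hd, hS⟩ :=
    hcyc.mul_swap_of_apply_eq_self hcx (by rw [hcz]; exact hσ'.apply_ne_self hzx)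
  -- insert `x` between `z` and `σ' z`
  have hle := hσ.numCycles_le_of_isCycle hσ' hd hS (by rwa [Perm.notMem_support])
    hcyc.two_le_card_support (mul_inv_apply_of_mem_cycleFactorsFinset hc) ?_
  · have := card_cycleType_mul_inv_of_mem_cycleFactorsFinset hc
    simp only [numCycles_eq_card_cycleType] at hle hlt
    omega
  intro u hu
  by_cases hux : u = x
  · rw [hux, mul_apply, swap_apply_left, hcz]
    exact hz'
  by_cases huz : u = z
  · rw [huz, mul_apply, swap_apply_right, hcx]
    exact hz.symm
  rw [Perm.mem_support, mul_apply, swap_apply_of_ne_of_ne hux huz] at hu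
  rw [mul_apply, swap_apply_of_ne_of_ne hux huz]
  exact hσ'.adj_cycleOf_apply (Perm.mem_support.2 hu) rfl

theorem IsMinTwoFactor.numCycles_le_of_reroute (hσ : IsMinTwoFactor G σ)
    (hσ' : IsTwoFactorAvoiding G x σ') {P Q : Perm V} {p q : V} (hP : P.IsCycle)
    (hQ : Q.IsCycle) (hPQ : P.Disjoint Q) (hp : P p ≠ p) (hq : Q q ≠ q) (hPx : P x = x)
    (hQx : Q x = x) (hr : ∀ u, r u = if u ∈ P.support ∪ Q.support then u else σ' u)
    (hPadj : ∀ u ∈ P.support, u ≠ p → G.Adj u (P u))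
    (hQadj : ∀ u ∈ Q.support, u ≠ q → G.Adj u (Q u))
    (hxp : G.Adj x p) (hxq : G.Adj x q) (hpq : G.Adj (P p) (Q q)) :
    numCycles σ ≤ numCycles r + 1 := by
  have hPinv : P⁻¹ (P p) = p := inv_eq_iff_eq.2 rfl
  have hPp : P⁻¹ (P p) ≠ P p := by rw [hPinv]; exact hp.symm
  obtain ⟨he, heS⟩ := hP.inv.mul_mul_swap hQ hPQ.inv_left hPp hq
  rw [support_inv] at heS
  have hxS : x ∉ P.support ∪ Q.support := by simp [hPx, hQx]
  have hqS : q ∈ P.support ∪ Q.support := mem_union_right _ (Perm.mem_support.2 hq)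
  obtain ⟨hd, hdS⟩ := he.mul_swap_of_apply_eq_self (a := x) (b := q)
    (by rwa [← Perm.notMem_support, heS]) (by rwa [← Perm.mem_support, heS])
  rw [heS] at hdS
  refine hσ.numCycles_le_of_isCycle hσ' hd hdS hxS
    (hP.two_le_card_support.trans (card_le_card subset_union_left)) hr ?_
  -- the new cycle runs `x → p → P⁻¹ p → ⋯ → P p → Q q → ⋯ → q → x`
  have hQPp : Q (P p) = P p := (hPQ (P p)).resolve_left fun h => hp (P.injective h)
  have hPQq : P⁻¹ (Q q) = Q q := by
    rw [inv_eq_iff_eq, (hPQ (Q q)).resolve_right fun h => hq (Q.injective h)]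
  have hxPp : x ≠ P p := fun h => hxS (h ▸ mem_union_left _ (Perm.apply_mem_support.2
    (Perm.mem_support.2 hp)))
  have hqx : q ≠ x := fun h => hxS (h ▸ hqS)
  intro u hu
  by_cases hux : u = x
  · rw [hux, mul_apply, swap_apply_left, mul_apply, swap_apply_right, mul_apply, hQPp, hPinv]
    exact hxp
  by_cases huq : u = q
  · rw [huq, mul_apply, swap_apply_right, mul_apply, swap_apply_of_ne_of_ne hxPp (Ne.symm hqx),
      mul_apply, hQx, inv_eq_iff_eq.2 hPx.symm]
    exact hxq.symm
  rw [mul_apply, swap_apply_of_ne_of_ne hux huq]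
  by_cases hup : u = P p
  · rw [hup, mul_apply, swap_apply_left, mul_apply, hPQq]
    exact hpq
  rw [mul_apply, swap_apply_of_ne_of_ne hup huq, mul_apply]
  rw [hdS, mem_insert, mem_union, Perm.mem_support, Perm.mem_support] at hu
  by_cases hQu : Q u = u
  · rw [hQu]
    exact adj_inv_apply_of_adj_apply hPadj
      (Perm.mem_support.2 ((hu.resolve_left hux).resolve_right (· hQu))) hup
  · rw [inv_eq_iff_eq.2 ((hPQ (Q u)).resolve_right fun h => hQu (Q.injective h)).symm]
    exact hQadj u (Perm.mem_support.2 hQu) huq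

theorem IsMinTwoFactor.not_adj_apply_apply_of_not_sameCycle (hσ : IsMinTwoFactor G σ)
    (hσ' : IsTwoFactorAvoiding G x σ') (hlt : numCycles σ' < numCycles σ) {w w' : V}
    (hw : G.Adj x w) (hw' : G.Adj x w') (hww' : ¬σ'.SameCycle w w') :
    ¬G.Adj (σ' w) (σ' w') := by
  intro hadj
  have hwx : w ≠ x := hw.ne.symm
  have hw'x : w' ≠ x := hw'.ne.symm
  have hc := hσ'.cycleOf_mem_cycleFactorsFinset hwx
  have hc' := hσ'.cycleOf_mem_cycleFactorsFinset hw'x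
  have hc'' : σ'.cycleOf w' ∈ (σ' * (σ'.cycleOf w)⁻¹).cycleFactorsFinset := by
    rw [cycleFactorsFinset_mul_inv_mem_eq_sdiff hc, mem_sdiff, Finset.mem_singleton]
    refine ⟨hc', fun h => hσ'.apply_ne_self hwx ?_⟩
    rw [← cycleOf_apply_self, ← h, cycleOf_apply_of_not_sameCycle fun h' => hww' h'.symm]
  have hle := hσ.numCycles_le_of_reroute hσ'
    (r := σ' * (σ'.cycleOf w)⁻¹ * (σ'.cycleOf w')⁻¹)
    (mem_cycleFactorsFinset_iff.1 hc).1 (mem_cycleFactorsFinset_iff.1 hc').1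
    (disjoint_cycleOf_of_not_sameCycle hww')
    (by rw [cycleOf_apply_self]; exact hσ'.apply_ne_self hwx)
    (by rw [cycleOf_apply_self]; exact hσ'.apply_ne_self hw'x)
    (cycleOf_apply_of_not_sameCycle (hσ'.not_sameCycle hwx))
    (cycleOf_apply_of_not_sameCycle (hσ'.not_sameCycle hw'x))
    (fun u => by
      rw [mul_inv_apply_of_mem_cycleFactorsFinset hc'', mul_inv_apply_of_mem_cycleFactorsFinset hc]
      simp only [mem_union]
      split_ifs <;> tauto)
    (fun u hu _ => hσ'.adj_cycleOf_apply hu rfl) (fun u hu _ => hσ'.adj_cycleOf_apply hu rfl)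
    hw hw' (by rwa [cycleOf_apply_self, cycleOf_apply_self])
  have := card_cycleType_mul_inv_of_mem_cycleFactorsFinset hc
  have := card_cycleType_mul_inv_of_mem_cycleFactorsFinset hc''
  simp only [numCycles_eq_card_cycleType] at hle hlt
  omega

theorem IsMinTwoFactor.not_adj_apply_apply_of_sameCycle (hσ : IsMinTwoFactor G σ)
    (hσ' : IsTwoFactorAvoiding G x σ') (hlt : numCycles σ' < numCycles σ) {w w' : V}
    (hw : G.Adj x w) (hw' : G.Adj x w') (hww' : σ'.SameCycle w w') (hne : w ≠ w')
    (h₁ : σ' w ≠ w') (h₂ : σ' w' ≠ w) : ¬G.Adj (σ' w) (σ' w') := by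
  intro hadj
  have hwx : w ≠ x := hw.ne.symm
  set s := σ' * swap w w'
  have hsw : s w = σ' w' := by rw [mul_apply, swap_apply_left]
  have hsw' : s w' = σ' w := by rw [mul_apply, swap_apply_right]
  have hX : s w ≠ w := by rwa [hsw]
  have hY : s w' ≠ w' := by rwa [hsw']
  have hsplit : ¬s.SameCycle w w' := not_sameCycle_mul_swap hww' hne
  have hC : ∀ u, s.SameCycle w u ∨ s.SameCycle w' u ↔ σ'.SameCycle w u := fun _ =>
    hww'.sameCycle_mul_swap_or_iff
  have hxC : ¬σ'.SameCycle w x := hσ'.not_sameCycle hwx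
  have hsu : ∀ u, u ≠ w → u ≠ w' → s u = σ' u := fun u huw huw' => by
    rw [mul_apply, swap_apply_of_ne_of_ne huw huw']
  have hc := hσ'.cycleOf_mem_cycleFactorsFinset hwx
  -- `s` splits the cycle of `w` into the cycles of `w'` and `w`, which are rerouted through `x`
  have hle := hσ.numCycles_le_of_reroute hσ' (r := σ' * (σ'.cycleOf w)⁻¹)
    (P := s.cycleOf w') (Q := s.cycleOf w) (p := w') (q := w)
    (isCycle_cycleOf s hY) (isCycle_cycleOf s hX)
    (disjoint_cycleOf_of_not_sameCycle fun h => hsplit h.symm)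
    (by rwa [cycleOf_apply_self]) (by rwa [cycleOf_apply_self])
    (cycleOf_apply_of_not_sameCycle fun h => hxC ((hC x).1 (.inr h)))
    (cycleOf_apply_of_not_sameCycle fun h => hxC ((hC x).1 (.inl h)))
    (fun u => by
      rw [mul_inv_apply_of_mem_cycleFactorsFinset hc]
      simp only [mem_union, mem_support_cycleOf_iff' hX, mem_support_cycleOf_iff' hY,
        mem_support_cycleOf_iff' (hσ'.apply_ne_self hwx), ← hC, or_comm])
    (fun u hu huw' => hσ'.adj_cycleOf_apply hu <| hsu u (by
      rintro rfl
      exact hsplit ((mem_support_cycleOf_iff' hY).1 hu).symm) huw')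
    (fun u hu huw => hσ'.adj_cycleOf_apply hu <| hsu u huw (by
      rintro rfl
      exact hsplit ((mem_support_cycleOf_iff' hX).1 hu)))
    hw' hw (by rwa [cycleOf_apply_self, cycleOf_apply_self, hsw', hsw])
  have := card_cycleType_mul_inv_of_mem_cycleFactorsFinset hc
  simp only [numCycles_eq_card_cycleType] at hle hlt
  omega

end TwoFactor
theorem compCount_induce_of_isIndepSet {V : Type*} {G : SimpleGraph V} {s : Set V}
    (hs : G.IsIndepSet s) :
    compCount (G.induce s) = Nat.card s := by
  have hbot : G.induce s = ⊥ := by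
    ext a b
    simp only [comap_adj, Function.Embedding.subtype_apply, bot_adj, iff_false]
    exact fun h => hs a.2 b.2 h.ne h
  rw [compCount, hbot]
  exact Nat.card_eq_of_bijective _ ⟨fun a b h => reachable_bot.1 (ConnectedComponent.exact h),
    fun c => c.exists_rep⟩ |>.symm

theorem Tough.mul_indepNum_add_indepNum_le {V : Type*} [Fintype V] [DecidableEq V]
    {G : SimpleGraph V} {t : ℝ} (ht : Tough t G) (hα : 1 < G.indepNum) :
    t * G.indepNum + G.indepNum ≤ Fintype.card V := by
  obtain ⟨s, hs, hcard⟩ := G.exists_isNIndepSet_indepNum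
  have hcomp : compCount (G.induce ((↑sᶜ : Set V)ᶜ)) = G.indepNum := by
    rw [coe_compl, compl_compl, compCount_induce_of_isIndepSet hs, Nat.card_coe_set_eq,
      Set.ncard_coe_finset, hcard]
  have h := ht sᶜ (by rwa [hcomp])
  rw [hcomp, card_compl, hcard, Nat.cast_sub (hcard ▸ card_le_univ s)] at h
  linarith

section Bounds

variable {V : Type*} [Fintype V] [DecidableEq V] {G : SimpleGraph V} [DecidableRel G.Adj]
  {σ σ' : Perm V} {x y : V}

theorem IsMinTwoFactor.isIndepSet_insert_image (hσ : IsMinTwoFactor G σ)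
    (hσ' : IsTwoFactorAvoiding G x σ') (hlt : numCycles σ' < numCycles σ) :
    G.IsIndepSet ↑(insert x ((G.neighborFinset x).image σ')) := by
  have hA : ∀ {z}, G.Adj x z → ¬G.Adj x (σ' z) := hσ.not_adj_apply_of_adj hσ' hlt
  rw [coe_insert, coe_image, coe_neighborFinset, SimpleGraph.IsIndepSet, Set.pairwise_insert]
  refine ⟨?_, ?_⟩
  · rintro _ ⟨u, hu, rfl⟩ _ ⟨v, hv, rfl⟩ hne hadj
    have huv : u ≠ v := fun h => hne (h ▸ rfl)
    rw [mem_neighborSet] at hu hv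
    by_cases h₁ : σ' u = v
    · exact hA hu (by rwa [h₁])
    by_cases h₂ : σ' v = u
    · exact hA hv (by rwa [h₂])
    by_cases hsc : σ'.SameCycle u v
    · exact hσ.not_adj_apply_apply_of_sameCycle hσ' hlt hu hv hsc huv h₁ h₂ hadj
    · exact hσ.not_adj_apply_apply_of_not_sameCycle hσ' hlt hu hv hsc hadj
  · rintro _ ⟨v, hv, rfl⟩ -
    exact ⟨hA hv, fun h => hA hv h.symm⟩

theorem IsMinTwoFactor.degree_lt_indepNum (hσ : IsMinTwoFactor G σ)
    (hx : CoAbsorbable G σ x) : G.degree x < G.indepNum := by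
  obtain ⟨σ', hσ', hlt⟩ := hx
  have hind := (hσ.isIndepSet_insert_image hσ' hlt).card_le_indepNum
  rwa [card_insert_of_notMem, card_image_of_injective _ σ'.injective,
    card_neighborFinset_eq_degree] at hind
  simp only [mem_image, mem_neighborFinset, not_exists, not_and]
  exact fun v hv h => hv.ne (σ'.injective (h.trans hσ'.1.symm)).symm

theorem TwoK2Free.card_le_indepNum_add_degree (h2 : TwoK2Free G) (hxy : G.Adj x y) :
    Fintype.card V ≤ G.indepNum + G.degree x + G.degree y := by
  set N := G.neighborFinset x ∪ G.neighborFinset y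
  have hI : G.IsIndepSet ↑Nᶜ := by
    intro a ha b hb _ hab
    simp only [N, coe_compl, Set.mem_compl_iff, mem_coe, mem_union, mem_neighborFinset,
      not_or] at ha hb
    exact h2 ⟨x, y, a, b, hxy, hab, fun h => ha.2 (h ▸ hxy.symm),
      fun h => hb.2 (h ▸ hxy.symm), fun h => ha.1 (h ▸ hxy), fun h => hb.1 (h ▸ hxy),
      ha.1, hb.1, ha.2, hb.2⟩
  calc Fintype.card V = #Nᶜ + #N := (card_compl_add_card N).symm
    _ ≤ G.indepNum + (#(G.neighborFinset x) + #(G.neighborFinset y)) :=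
      add_le_add hI.card_le_indepNum (card_union_le _ _)
    _ = G.indepNum + G.degree x + G.degree y := by
      rw [card_neighborFinset_eq_degree, card_neighborFinset_eq_degree, add_assoc]

end Bounds

theorem stmt6_general {V : Type*} [Fintype V] (G : SimpleGraph V) (h2 : TwoK2Free G)
    (ht : Tough 2 G) (σ : Equiv.Perm V) (hσ : IsMinTwoFactor G σ) :
    _root_.IsIndepSet G {x : V | CoAbsorbable G σ x} := by
  classical
  intro x hx y hy hxy
  have hdx := hσ.degree_lt_indepNum hx
  have hdy := hσ.degree_lt_indepNum hy
  have hn := h2.card_le_indepNum_add_degree hxy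
  have hα : 1 < G.indepNum := by
    have := (G.degree_pos_iff_exists_adj x).2 ⟨y, hxy⟩
    omega
  have h3 : 3 * G.indepNum ≤ Fintype.card V := by
    have := ht.mul_indepNum_add_indepNum_le hα
    exact_mod_cast (by linarith : (3 : ℝ) * G.indepNum ≤ Fintype.card V)
  omega

theorem stmt6 {V : Type*} [Fintype V] (G : SimpleGraph V) (h2 : TwoK2Free G)
    (ht : Tough 2 G) (σ : Equiv.Perm V) (hσ : IsMinTwoFactor G σ)
    (hcyc : 1 < numCycles σ) :
    _root_.IsIndepSet G {x : V | CoAbsorbable G σ x} :=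
  stmt6_general G h2 ht σ hσ
end

section
/- Let G be a 2-tough 2K_2-free graph with minimum-component 2-factor F having at least two cycles. At most two cycles of F fail to be AB-alternating (i.e., fail to alternate between A-type and B-type vertices). -/
open SimpleGraph

/-!
A minimum 2-factor admits no exchange of two, three or four of its edges that merges two of its
cycles, and its cycles may be reoriented freely without losing minimality. With `2K₂`-freeness
these exchanges rule out two consecutive `A`-type vertices, so a cycle that does not alternate
contains an edge `u u⁺` of two `B`-type vertices. Every vertex `x` off the cycle of `u` then has
`x` or `x⁺` nonadjacent to both `u` and `u⁺`; these common non-neighbours together with `u` form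
an independent set `I`, and `2`-toughness gives `3|I| ≤ n`. So at most `2(|I| - 1)` vertices lie
off the cycle, which therefore has more than `n/3 + 1` vertices, and no three such cycles fit.
-/

namespace Equiv.Perm

variable {α : Type*} {σ τ : Perm α} {a b x y : α}

theorem SameCycle.of_forall_sameCycle_apply (h : ∀ a, τ.SameCycle a (σ a))
    (hxy : σ.SameCycle x y) : τ.SameCycle x y := by
  obtain ⟨i, rfl⟩ := hxy
  induction i using Int.induction_on with
  | zero => exact .refl _ _
  | succ i ih => rw [add_comm, zpow_add, zpow_one, mul_apply]; exact ih.trans (h _)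
  | pred i ih =>
    rw [sub_eq_neg_add, zpow_add, zpow_neg_one, mul_apply]
    exact ih.trans (by simpa using (h (σ⁻¹ ((σ ^ (-(i : ℤ))) x))).symm)

theorem ne_of_not_sameCycle (h : ¬σ.SameCycle x y) : x ≠ y := by
  rintro rfl; exact h (.refl _ _)

/-- The `σ`-arc from `a` to `b` never passes through `σ⁻¹ a` before reaching `b`. -/
theorem SameCycle.of_eq_on_arc [Finite α] (hab : σ.SameCycle a b)
    (h : ∀ c, σ.SameCycle a c → c ≠ b → c ≠ σ⁻¹ a → τ c = σ c) : τ.SameCycle a b := by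
  classical
  have hex : ∃ n : ℕ, (σ ^ n) a = b := hab.exists_nat_pow_eq
  set N := Nat.find hex
  have hN : (σ ^ N) a = b := Nat.find_spec hex
  have hagree : ∀ k ≤ N, (τ ^ k) a = (σ ^ k) a := by
    intro k hk
    induction k with
    | zero => rfl
    | succ k ih =>
      have hb : (σ ^ k) a ≠ b := Nat.find_min hex (by omega)
      have hlast : (σ ^ k) a ≠ σ⁻¹ a := by
        intro hk'
        apply Nat.find_min hex (m := N - (k + 1)) (by omega)
        rw [← hN, show N = (N - (k + 1)) + (k + 1) by omega, pow_add, mul_apply (σ ^ _),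
          pow_succ', mul_apply, hk', Nat.add_sub_cancel]
        simp
      rw [pow_succ', mul_apply, ih (by omega), h _ ⟨k, by simp⟩ hb hlast, ← mul_apply,
        ← pow_succ']
  exact ⟨N, by rw [zpow_natCast, hagree N le_rfl, hN]⟩

theorem eq_or_eq_of_sameCycle_of_apply_apply_eq [Finite α] (h2 : τ (τ x) = x)
    (h : τ.SameCycle x y) : y = x ∨ y = τ x := by
  obtain ⟨n, rfl⟩ := h.exists_nat_pow_eq
  have hper : Function.IsPeriodicPt τ 2 x := h2
  rw [coe_pow, ← hper.iterate_mod_apply]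
  rcases Nat.mod_two_eq_zero_or_one n with h | h <;> simp [h]

/-- `σ * c⁻¹` deletes the cycle `c` of `a` from `σ`, and the second factor `c⁻¹` puts it back
reversed. -/
noncomputable def revCycle (σ : Perm α) (a : α) : Perm α := by
  classical exact σ * (σ.cycleOf a)⁻¹ * (σ.cycleOf a)⁻¹

theorem revCycle_apply_of_sameCycle (h : σ.SameCycle a b) : σ.revCycle a b = σ⁻¹ b := by
  classical
  simp [revCycle, cycleOf_inv, cycleOf_apply, h]

theorem revCycle_apply_of_not_sameCycle (h : ¬σ.SameCycle a b) : σ.revCycle a b = σ b := by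
  classical
  simp [revCycle, cycleOf_inv, cycleOf_apply, sameCycle_inv, h]

theorem sameCycle_revCycle_iff : (σ.revCycle a).SameCycle x y ↔ σ.SameCycle x y := by
  refine ⟨SameCycle.of_forall_sameCycle_apply fun b => ?_,
    SameCycle.of_forall_sameCycle_apply fun b => ?_⟩
  · by_cases h : σ.SameCycle a b
    · rw [revCycle_apply_of_sameCycle h]; exact ⟨-1, by simp⟩
    · rw [revCycle_apply_of_not_sameCycle h]; exact ⟨1, by simp⟩
  · by_cases h : σ.SameCycle a b
    · have h' := revCycle_apply_of_sameCycle (sameCycle_apply_right.2 h)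
      simp only [coe_inv, symm_apply_apply] at h'
      exact ⟨-1, by rw [zpow_neg_one, inv_eq_iff_eq, h']⟩
    · exact ⟨1, by simp [revCycle_apply_of_not_sameCycle h]⟩

def IsEdge (σ : Perm α) (x y : α) : Prop := σ x = y ∨ σ y = x

theorem IsEdge.sameCycle (h : σ.IsEdge x y) : σ.SameCycle x y :=
  h.elim (fun h => h ▸ ⟨1, by simp⟩) fun h => h ▸ ⟨-1, by simp⟩

theorem IsEdge.revCycle (h : σ.IsEdge x y) : (σ.revCycle a).IsEdge x y := by
  by_cases hx : σ.SameCycle a x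
  · have hy := hx.trans h.sameCycle
    rcases h with h | h
    · exact Or.inr (by rw [revCycle_apply_of_sameCycle hy, ← h]; simp)
    · exact Or.inl (by rw [revCycle_apply_of_sameCycle hx, ← h]; simp)
  · have hy : ¬σ.SameCycle a y := fun hy => hx (hy.trans h.sameCycle.symm)
    rwa [IsEdge, revCycle_apply_of_not_sameCycle hx, revCycle_apply_of_not_sameCycle hy]

end Equiv.Perm

open Equiv Equiv.Perm Finset

theorem IsTwoFactor.apply_ne {V : Type*} {G : SimpleGraph V} {σ : Perm V} (hσ : IsTwoFactor G σ)
    (x : V) : σ x ≠ x :=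
  (hσ x).1.ne'

section TwoFactor

variable {V : Type*} [Fintype V] {G : SimpleGraph V} {σ τ : Perm V} {x y : V}

theorem numCycles_eq_card_quotient (hσ : ∀ x, σ x ≠ x) :
    numCycles σ = Nat.card (Quotient (SameCycle.setoid σ)) := by
  classical
  have hcard : numCycles σ = #σ.cycleFactorsFinset := by
    rw [numCycles, cycleType_def, Multiset.card_map, card_def]
  have hmem : ∀ x, σ.cycleOf x ∈ σ.cycleFactorsFinset := fun x =>
    cycleOf_mem_cycleFactorsFinset_iff.2 (mem_support.2 (hσ x))
  let f : Quotient (SameCycle.setoid σ) → σ.cycleFactorsFinset :=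
    Quotient.lift (fun x => ⟨σ.cycleOf x, hmem x⟩) fun _ _ h => Subtype.ext h.cycleOf_eq
  have hf : Function.Bijective f := by
    refine ⟨fun q q' => ?_, fun ⟨c, hc⟩ => ?_⟩
    · induction q using Quotient.ind
      induction q' using Quotient.ind
      intro h
      exact Quotient.sound ((sameCycle_iff_cycleOf_eq_of_mem_support
        (mem_support.2 (hσ _)) (mem_support.2 (hσ _))).2 (congrArg Subtype.val h))
    · obtain ⟨a, ha, -⟩ := (mem_cycleFactorsFinset_iff.1 hc).1
      exact ⟨Quotient.mk _ a, Subtype.ext (cycle_is_cycleOf (mem_support.2 ha) hc).symm⟩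
  rw [hcard, Nat.card_eq_of_bijective f hf, Nat.card_eq_finsetCard]

theorem numCycles_lt_of_sameCycle_imp (hσ : ∀ x, σ x ≠ x) (hτ : ∀ x, τ x ≠ x)
    (himp : ∀ x y, σ.SameCycle x y → τ.SameCycle x y) (hxy : ¬σ.SameCycle x y)
    (hτxy : τ.SameCycle x y) : numCycles τ < numCycles σ := by
  classical
  rw [numCycles_eq_card_quotient hσ, numCycles_eq_card_quotient hτ, Nat.card_eq_fintype_card,
    Nat.card_eq_fintype_card]
  let f : Quotient (SameCycle.setoid σ) → Quotient (SameCycle.setoid τ) :=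
    Quotient.map id himp
  refine Fintype.card_lt_of_surjective_not_injective f (Quotient.ind fun a => ⟨⟦a⟧, rfl⟩)
    fun hinj => hxy (Quotient.exact (hinj (Quotient.sound hτxy : f ⟦x⟧ = f ⟦y⟧)))

theorem exists_not_sameCycle_of_one_lt_numCycles (hσ : ∀ x, σ x ≠ x)
    (h : 1 < numCycles σ) : ∃ x y, ¬σ.SameCycle x y := by
  by_contra! hall
  have : Subsingleton (Quotient (SameCycle.setoid σ)) :=
    ⟨Quotient.ind₂ fun x y => Quotient.sound (hall x y)⟩
  have := Finite.card_le_one_iff_subsingleton.2 this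
  rw [← numCycles_eq_card_quotient hσ] at this
  omega

/-- Every cycle of such a `τ` contains a cycle of `σ`, which has at least three vertices. -/
theorem IsTwoFactor.of_sameCycle_apply (hσ : IsTwoFactor G σ) (hadj : ∀ a, G.Adj a (τ a))
    (hτσ : ∀ a, τ.SameCycle a (σ a)) : IsTwoFactor G τ := by
  refine fun x => ⟨hadj x, fun h2 => ?_⟩
  have h1 := eq_or_eq_of_sameCycle_of_apply_apply_eq h2 (hτσ x)
  have h2 := eq_or_eq_of_sameCycle_of_apply_apply_eq h2 ((hτσ x).trans (hτσ (σ x)))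
  have := hσ.apply_ne x
  have := hσ.apply_ne (σ x)
  have := (hσ x).2
  grind

theorem IsMinTwoFactor.revCycle (hσ : IsMinTwoFactor G σ) (a : V) :
    IsMinTwoFactor G (σ.revCycle a) := by
  have hadj : ∀ b, G.Adj b (σ.revCycle a b) := fun b => by
    by_cases h : σ.SameCycle a b
    · simpa [revCycle_apply_of_sameCycle h, SimpleGraph.adj_comm] using (hσ.1 (σ⁻¹ b)).1
    · exact revCycle_apply_of_not_sameCycle h ▸ (hσ.1 b).1
  have hrev : IsTwoFactor G (σ.revCycle a) :=
    hσ.1.of_sameCycle_apply hadj fun b => sameCycle_revCycle_iff.2 ⟨1, by simp⟩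
  have hnum : numCycles (σ.revCycle a) = numCycles σ := by
    rw [numCycles_eq_card_quotient hrev.apply_ne, numCycles_eq_card_quotient hσ.1.apply_ne]
    congr 2
    exact Setoid.ext fun _ _ => sameCycle_revCycle_iff
  exact ⟨hrev, fun τ hτ => hnum ▸ hσ.2 τ hτ⟩

theorem IsMinTwoFactor.exists_orient₂ (hσ : IsMinTwoFactor G σ) {a b c d : V}
    (hac : σ.SameCycle a c) (h : σ a = b ∧ σ c = d ∨ σ b = a ∧ σ d = c) :
    ∃ π, IsMinTwoFactor G π ∧ (∀ x y, π.SameCycle x y ↔ σ.SameCycle x y) ∧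
      (∀ x y, σ.IsEdge x y → π.IsEdge x y) ∧ (∀ x, ¬σ.SameCycle a x → π x = σ x) ∧
      π a = b ∧ π c = d := by
  rcases h with ⟨hb, hd⟩ | ⟨hb, hd⟩
  · exact ⟨σ, hσ, fun _ _ => .rfl, fun _ _ => id, fun _ _ => rfl, hb, hd⟩
  · refine ⟨σ.revCycle a, hσ.revCycle a, fun _ _ => sameCycle_revCycle_iff,
      fun _ _ => IsEdge.revCycle, fun _ => revCycle_apply_of_not_sameCycle, ?_, ?_⟩
    · rw [revCycle_apply_of_sameCycle (.refl _ _), ← hb]; simp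
    · rw [revCycle_apply_of_sameCycle hac, ← hd]; simp

theorem IsMinTwoFactor.exists_orient (hσ : IsMinTwoFactor G σ) {a b : V} (h : σ.IsEdge a b) :
    ∃ π, IsMinTwoFactor G π ∧ (∀ x y, π.SameCycle x y ↔ σ.SameCycle x y) ∧
      (∀ x y, σ.IsEdge x y → π.IsEdge x y) ∧ (∀ x, ¬σ.SameCycle a x → π x = σ x) ∧
      π a = b := by
  obtain ⟨π, hπ, hsc, hedge, hoff, hab, -⟩ :=
    hσ.exists_orient₂ (.refl σ a) (h.imp (fun h => ⟨h, h⟩) fun h => ⟨h, h⟩)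
  exact ⟨π, hπ, hsc, hedge, hoff, hab⟩

end TwoFactor

section Exchange

variable {V : Type*} [Fintype V] {G : SimpleGraph V} {σ τ : Perm V}

theorem IsMinTwoFactor.sameCycle_of_reroute (hσ : IsMinTwoFactor G σ) {S : Set V}
    (hτ : ∀ a ∉ S, τ a = σ a) (hadj : ∀ a ∈ S, G.Adj a (τ a))
    (hτσ : ∀ a ∈ S, τ.SameCycle a (σ a)) {x y : V} (h : τ.SameCycle x y) : σ.SameCycle x y := by
  have hadj' : ∀ a, G.Adj a (τ a) := fun a => by
    by_cases ha : a ∈ S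
    · exact hadj a ha
    · exact hτ a ha ▸ (hσ.1 a).1
  have hτσ' : ∀ a, τ.SameCycle a (σ a) := fun a => by
    by_cases ha : a ∈ S
    · exact hτσ a ha
    · exact hτ a ha ▸ ⟨1, by simp⟩
  have hτ2 := hσ.1.of_sameCycle_apply hadj' hτσ'
  by_contra hxy
  exact (hσ.2 τ hτ2).not_gt (numCycles_lt_of_sameCycle_imp hσ.1.apply_ne hτ2.apply_ne
    (fun _ _ => SameCycle.of_forall_sameCycle_apply hτσ') hxy h)

theorem IsMinTwoFactor.not_adj_apply_of_adj_apply (hσ : IsMinTwoFactor G σ) {x y : V}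
    (hxy : ¬σ.SameCycle x y) (h : G.Adj x (σ y)) : ¬G.Adj y (σ x) := by
  classical
  intro h'
  set τ := σ * swap x y
  have hτx : τ x = σ y := by simp [τ]
  have hτy : τ y = σ x := by simp [τ]
  have hτ : ∀ a ∉ ({x, y} : Set V), τ a = σ a := fun a ha => by
    simp only [Set.mem_insert_iff, Set.mem_singleton_iff, not_or] at ha
    simp [τ, swap_apply_of_ne_of_ne ha.1 ha.2]
  have cy : τ.SameCycle (σ y) y := SameCycle.of_eq_on_arc ⟨-1, by simp⟩ fun c hc hcy _ =>
    hτ c (by rintro (rfl | rfl); exacts [hxy (sameCycle_apply_left.1 hc).symm, hcy rfl])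
  have cx : τ.SameCycle (σ x) x := SameCycle.of_eq_on_arc ⟨-1, by simp⟩ fun c hc hcx _ =>
    hτ c (by rintro (rfl | rfl); exacts [hcx rfl, hxy (sameCycle_apply_left.1 hc)])
  have sx : τ.SameCycle x (σ y) := hτx ▸ ⟨1, by simp⟩
  have sy : τ.SameCycle y (σ x) := hτy ▸ ⟨1, by simp⟩
  refine hxy (hσ.sameCycle_of_reroute hτ ?_ ?_ (sx.trans cy))
  · simpa [hτx, hτy] using ⟨h, h'⟩
  · simpa using ⟨(sx.trans cy).trans sy, (sy.trans cx).trans sx⟩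

theorem IsMinTwoFactor.not_adj_apply_of_three_exchange (hσ : IsMinTwoFactor G σ) {u z w : V}
    (huz : ¬σ.SameCycle u z) (huw : ¬σ.SameCycle u w) (hzw : ¬σ.SameCycle z w)
    (h1 : G.Adj u (σ z)) (h2 : G.Adj z (σ w)) : ¬G.Adj w (σ u) := by
  classical
  intro h3
  have huz' := ne_of_not_sameCycle huz
  have huw' := ne_of_not_sameCycle huw
  have hzw' := ne_of_not_sameCycle hzw
  -- `τ` runs `u → σ z ⇝ z → σ w ⇝ w → σ u ⇝ u`.
  set τ := σ * (swap u w * swap u z)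
  have hτu : τ u = σ z := by simp [τ, swap_apply_of_ne_of_ne huz'.symm hzw']
  have hτz : τ z = σ w := by simp [τ]
  have hτw : τ w = σ u := by simp [τ, swap_apply_of_ne_of_ne huw'.symm hzw'.symm]
  have hτ : ∀ a ∉ ({u, z, w} : Set V), τ a = σ a := fun a ha => by
    simp only [Set.mem_insert_iff, Set.mem_singleton_iff, not_or] at ha
    simp [τ, swap_apply_of_ne_of_ne, ha]
  have cz : τ.SameCycle (σ z) z := SameCycle.of_eq_on_arc (sameCycle_apply_left.2 (.refl _ _))
    fun c hc hcz _ => by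
      have hc := sameCycle_apply_left.1 hc
      exact hτ c (by rintro (rfl | rfl | rfl); exacts [huz hc.symm, hcz rfl, hzw hc])
  have cw : τ.SameCycle (σ w) w := SameCycle.of_eq_on_arc (sameCycle_apply_left.2 (.refl _ _))
    fun c hc hcw _ => by
      have hc := sameCycle_apply_left.1 hc
      exact hτ c (by rintro (rfl | rfl | rfl); exacts [huw hc.symm, hzw hc.symm, hcw rfl])
  have cu : τ.SameCycle (σ u) u := SameCycle.of_eq_on_arc (sameCycle_apply_left.2 (.refl _ _))
    fun c hc hcu _ => by
      have hc := sameCycle_apply_left.1 hc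
      exact hτ c (by rintro (rfl | rfl | rfl); exacts [hcu rfl, huz hc, huw hc])
  have su : τ.SameCycle u (σ z) := hτu ▸ ⟨1, by simp⟩
  have sz : τ.SameCycle z (σ w) := hτz ▸ ⟨1, by simp⟩
  have sw : τ.SameCycle w (σ u) := hτw ▸ ⟨1, by simp⟩
  refine huz (hσ.sameCycle_of_reroute hτ ?_ ?_ (su.trans cz))
  · simpa [hτu, hτz, hτw] using ⟨h1, h2, h3⟩
  · simpa using ⟨(su.trans cz).trans ((sz.trans cw).trans sw),
      (sz.trans cw).trans ((sw.trans cu).trans su), (sw.trans cu).trans ((su.trans cz).trans sz)⟩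

theorem IsMinTwoFactor.not_adj_apply_of_four_exchange (hσ : IsMinTwoFactor G σ) {p r z w : V}
    (hr : σ r = p) (hpz : ¬σ.SameCycle p z) (hzw : σ.SameCycle z w) (hne : z ≠ w)
    (h1 : G.Adj p (σ w)) (h2 : G.Adj w p) (h3 : G.Adj r (σ z)) : ¬G.Adj z (σ p) := by
  classical
  intro h4
  have hrp : σ.SameCycle r p := hr ▸ ⟨1, by simp⟩
  have hpw : ¬σ.SameCycle p w := fun h => hpz (h.trans hzw.symm)
  have hrz : ¬σ.SameCycle r z := fun h => hpz (hrp.symm.trans h)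
  have hrw : ¬σ.SameCycle r w := fun h => hpw (hrp.symm.trans h)
  have := ne_of_not_sameCycle hpz
  have := ne_of_not_sameCycle hpw
  have := ne_of_not_sameCycle hrz
  have := ne_of_not_sameCycle hrw
  have : p ≠ r := fun h => hσ.1.apply_ne r (hr.trans h)
  -- `τ` runs `p → σ w ⇝ z → σ p ⇝ r → σ z ⇝ w → p`.
  set τ := σ * (swap p z * (swap p r * swap p w))
  have hτp : τ p = σ w := by simp [τ, swap_apply_of_ne_of_ne, *, Ne.symm]
  have hτw : τ w = p := by simp [τ, swap_apply_of_ne_of_ne, *, Ne.symm]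
  have hτr : τ r = σ z := by simp [τ, swap_apply_of_ne_of_ne, *, Ne.symm]
  have hτz : τ z = σ p := by simp [τ, swap_apply_of_ne_of_ne, *, Ne.symm]
  have hτ : ∀ a ∉ ({p, r, z, w} : Set V), τ a = σ a := fun a ha => by
    simp only [Set.mem_insert_iff, Set.mem_singleton_iff, not_or] at ha
    simp [τ, swap_apply_of_ne_of_ne, ha]
  have cz : τ.SameCycle (σ w) z := SameCycle.of_eq_on_arc (sameCycle_apply_left.2 hzw.symm)
    fun c hc hcz hcw => by
      have hc := sameCycle_apply_left.1 hc
      refine hτ c ?_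
      rintro (rfl | rfl | rfl | rfl)
      exacts [hpw hc.symm, hrw hc.symm, hcz rfl, hcw (by simp)]
  have cw : τ.SameCycle (σ z) w := SameCycle.of_eq_on_arc (sameCycle_apply_left.2 hzw)
    fun c hc hcw hcz => by
      have hc := sameCycle_apply_left.1 hc
      refine hτ c ?_
      rintro (rfl | rfl | rfl | rfl)
      exacts [hpz hc.symm, hrz hc.symm, hcz (by simp), hcw rfl]
  have cr : τ.SameCycle (σ p) r := SameCycle.of_eq_on_arc (sameCycle_apply_left.2 hrp.symm)
    fun c hc hcr hcp => by
      have hc := sameCycle_apply_left.1 hc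
      refine hτ c ?_
      rintro (rfl | rfl | rfl | rfl)
      exacts [hcp (by simp), hcr rfl, hpz hc, hpw hc]
  have sp : τ.SameCycle p (σ w) := hτp ▸ ⟨1, by simp⟩
  have sw : τ.SameCycle w p := hτw ▸ ⟨1, by simp⟩
  have sr : τ.SameCycle r (σ z) := hτr ▸ ⟨1, by simp⟩
  have sz : τ.SameCycle z (σ p) := hτz ▸ ⟨1, by simp⟩
  refine hpz (hσ.sameCycle_of_reroute hτ ?_ ?_ (sp.trans cz))
  · simpa [hτp, hτw, hτr, hτz, hr] using ⟨h1, h3, h4, h2⟩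
  · simpa [hr] using ⟨(sp.trans cz).trans sz, (sr.trans cw).trans sw,
      (sz.trans cr).trans sr, sw.trans sp⟩

theorem IsMinTwoFactor.not_adj_of_two_exchange (hσ : IsMinTwoFactor G σ) {a a' b b' : V}
    (hab : ¬σ.SameCycle a b) (ha : σ.IsEdge a a') (hb : σ.IsEdge b b') (h : G.Adj a b') :
    ¬G.Adj b a' := by
  obtain ⟨π, hπ, sc₁, e₁, -, ha₁⟩ := hσ.exists_orient ha
  obtain ⟨ρ, hρ, sc₂, -, off₂, hb₂⟩ := hπ.exists_orient (e₁ _ _ hb)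
  have ha₂ : ρ a = a' := by rw [off₂ a (by rw [sc₁]; exact fun h => hab h.symm), ha₁]
  rw [← ha₂]; rw [← hb₂] at h
  exact hρ.not_adj_apply_of_adj_apply (by rwa [sc₂, sc₁]) h

theorem IsMinTwoFactor.not_adj_of_three_exchange (hσ : IsMinTwoFactor G σ)
    {u u' z z' w w' : V} (huz : ¬σ.SameCycle u z) (huw : ¬σ.SameCycle u w)
    (hzw : ¬σ.SameCycle z w) (hu : σ.IsEdge u u') (hz : σ.IsEdge z z') (hw : σ.IsEdge w w')
    (h1 : G.Adj u z') (h2 : G.Adj z w') : ¬G.Adj w u' := by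
  obtain ⟨π₁, hπ₁, sc₁, e₁, -, hu₁⟩ := hσ.exists_orient hu
  obtain ⟨π₂, hπ₂, sc₂, e₂, off₂, hz₂⟩ := hπ₁.exists_orient (e₁ _ _ hz)
  obtain ⟨π₃, hπ₃, sc₃, -, off₃, hw₃⟩ := hπ₂.exists_orient (e₂ _ _ (e₁ _ _ hw))
  have hu₃ : π₃ u = u' := by
    rw [off₃ u (by rw [sc₂, sc₁]; exact fun h => huw h.symm),
      off₂ u (by rw [sc₁]; exact fun h => huz h.symm), hu₁]
  have hz₃ : π₃ z = z' := by
    rw [off₃ z (by rw [sc₂, sc₁]; exact fun h => hzw h.symm), hz₂]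
  rw [← hu₃]; rw [← hz₃] at h1; rw [← hw₃] at h2
  exact hπ₃.not_adj_apply_of_three_exchange (by rwa [sc₃, sc₂, sc₁])
    (by rwa [sc₃, sc₂, sc₁]) (by rwa [sc₃, sc₂, sc₁]) h1 h2

theorem IsMinTwoFactor.not_adj_of_four_exchange (hσ : IsMinTwoFactor G σ) {u x x' y y' : V}
    (hux : ¬σ.SameCycle u x) (hxy : σ.SameCycle x y) (hne : x ≠ y)
    (horient : σ x = x' ∧ σ y = y' ∨ σ x' = x ∧ σ y' = y)
    (h1 : G.Adj (σ u) y') (h2 : G.Adj (σ u) y) (h3 : G.Adj (σ (σ u)) x') : ¬G.Adj x u := by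
  obtain ⟨π, hπ, sc₁, -, off₁, hx₁, hy₁⟩ := hσ.exists_orient₂ hxy horient
  have hxu : ¬σ.SameCycle x u := fun h => hux h.symm
  -- The cycle of `u` is reversed to run `σ (σ u) → σ u → u`.
  obtain ⟨ρ, hρ, sc₂, -, off₂, hr₂, hp₂⟩ := hπ.exists_orient₂ (a := σ (σ u)) (b := σ u)
    (c := σ u) (d := u) ((sc₁ _ _).2 (sameCycle_apply_left.2 (.refl _ _)))
    (Or.inr ⟨by rw [off₁ _ (by rwa [sameCycle_apply_right])], off₁ _ hxu⟩)
  have hux₂ : ¬π.SameCycle (σ (σ u)) x := by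
    rw [sc₁, sameCycle_apply_left, sameCycle_apply_left]; exact hux
  have hx₂ : ρ x = x' := by rw [off₂ x hux₂, hx₁]
  have hy₂ : ρ y = y' := by rw [off₂ y (fun h => hux₂ (h.trans ((sc₁ _ _).2 hxy).symm)), hy₁]
  rw [← hp₂]
  rw [← hy₂] at h1; rw [← hx₂] at h3
  exact hρ.not_adj_apply_of_four_exchange hr₂
    (by rw [sc₂, sc₁, sameCycle_apply_left]; exact hux) (by rwa [sc₂, sc₁]) hne h1 h2.symm h3

end Exchange

theorem TwoK2Free.adj_of_not_sameCycle {V : Type*} {G : SimpleGraph V} {σ : Perm V}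
    (h : TwoK2Free G) (hσ : IsTwoFactor G σ) {z w : V} (hzw : ¬σ.SameCycle z w) :
    G.Adj z w ∨ G.Adj z (σ w) ∨ G.Adj (σ z) w ∨ G.Adj (σ z) (σ w) := by
  by_contra! hno
  exact h ⟨z, σ z, w, σ w, (hσ z).1, (hσ w).1, ne_of_not_sameCycle hzw,
    ne_of_not_sameCycle (σ := σ) (by simpa using hzw),
    ne_of_not_sameCycle (σ := σ) (by simpa using hzw),
    ne_of_not_sameCycle (σ := σ) (by simpa using hzw), hno⟩

section AType

variable {V : Type*} [Fintype V] {G : SimpleGraph V} {σ : Perm V}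

theorem IsMinTwoFactor.not_aType_and_aType_apply (hσ : IsMinTwoFactor G σ) (h2 : TwoK2Free G)
    (u : V) : ¬(AType G σ u ∧ AType G σ (σ u)) := by
  rintro ⟨⟨z, huz, hz, hσz⟩, ⟨w, huw, hw, hσw⟩⟩
  rw [sameCycle_apply_left] at huw
  have hu : σ.IsEdge u (σ u) := Or.inl rfl
  by_cases hzw : σ.SameCycle z w
  · by_cases hzw' : z = w
    · subst hzw'
      exact hσ.not_adj_of_two_exchange huz hu (Or.inl rfl) hσz hw.symm
    have hσzw : σ z ≠ σ w := fun h => hzw' (σ.injective h)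
    rcases h2.adj_of_not_sameCycle hσ.1 (z := σ u) (w := z) (by simpa using huz) with
      h | h | h | h
    · exact hσ.not_adj_of_two_exchange huz hu (Or.inl rfl) hσz h.symm
    · exact hσ.not_adj_of_two_exchange (by simpa using huz) hu (Or.inr rfl) hz h.symm
    · exact hσ.not_adj_of_four_exchange (by simpa using huz) (by simpa using hzw) hσzw
        (Or.inr ⟨rfl, rfl⟩) hw hσw h hσz.symm
    · exact hσ.not_adj_of_four_exchange huz hzw hzw' (Or.inl ⟨rfl, rfl⟩) hσw hw h hz.symm
  · rcases h2.adj_of_not_sameCycle hσ.1 hzw with h | h | h | h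
    · exact hσ.not_adj_of_three_exchange huz (by simpa using huw) (by simpa using hzw) hu
        (Or.inl rfl) (Or.inr rfl) hσz h hσw.symm
    · exact hσ.not_adj_of_three_exchange huz huw hzw hu (Or.inl rfl) (Or.inl rfl) hσz h hw.symm
    · exact hσ.not_adj_of_three_exchange (by simpa using huz) (by simpa using huw)
        (by simpa using hzw) hu (Or.inr rfl) (Or.inr rfl) hz h hσw.symm
    · exact hσ.not_adj_of_three_exchange (by simpa using huz) huw (by simpa using hzw) hu
        (Or.inr rfl) (Or.inl rfl) hz h hw.symm

end AType

theorem TwoK2Free.isIndepSet_insert {V : Type*} {G : SimpleGraph V} (h : TwoK2Free G)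
    {u v : V} (huv : G.Adj u v) : G.IsIndepSet (insert u {x | ¬G.Adj u x ∧ ¬G.Adj v x}) := by
  have hu : ∀ {x}, ¬G.Adj v x → u ≠ x := fun hvx e => hvx (e ▸ huv.symm)
  have hv : ∀ {x}, ¬G.Adj u x → v ≠ x := fun hux e => hux (e ▸ huv)
  rintro x (rfl | ⟨hux, hvx⟩) y (rfl | ⟨huy, hvy⟩) hxy hadj
  · exact hxy rfl
  · exact huy hadj
  · exact hux hadj.symm
  · exact h ⟨x, y, u, v, hadj, huv, (hu hvx).symm, (hv hux).symm, (hu hvy).symm,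
      (hv huy).symm, fun h => hux h.symm, fun h => hvx h.symm, fun h => huy h.symm,
      fun h => hvy h.symm⟩

theorem Tough.three_mul_card_le {V : Type*} [Fintype V] {G : SimpleGraph V} (ht : Tough 2 G)
    {I : Finset V} (hI : G.IsIndepSet ↑I) (hcard : 2 ≤ #I) : 3 * #I ≤ Fintype.card V := by
  classical
  have hcomp : compCount (G.induce ((↑Iᶜ : Set V)ᶜ)) = #I := by
    rw [coe_compl, compl_compl, compCount_induce_of_isIndepSet hI, Nat.card_coe_set_eq,
      Set.ncard_coe_finset]
  have htough := ht Iᶜ (by rw [hcomp]; omega)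
  rw [hcomp, card_compl] at htough
  have : 2 * #I ≤ Fintype.card V - #I := by exact_mod_cast htough
  have := card_le_univ I
  omega

theorem card_le_two_mul_card_of_forall_mem_or_apply_mem {α : Type*} [DecidableEq α]
    (f : Perm α) {s t : Finset α} (h : ∀ x ∈ s, x ∈ t ∨ f x ∈ t) : #s ≤ 2 * #t :=
  calc #s ≤ #(t ∪ t.map f.symm.toEmbedding) := card_le_card fun x hx => by
          rcases h x hx with h | h
          · exact mem_union_left _ h
          · exact mem_union_right _ (mem_map_equiv.2 (by simpa using h))
    _ ≤ #t + #(t.map f.symm.toEmbedding) := card_union_le _ _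
    _ = 2 * #t := by rw [card_map]; ring

section Bound

variable {V : Type*} [Fintype V] {G : SimpleGraph V} {σ : Perm V} {u : V}

theorem IsMinTwoFactor.nonadj_or_nonadj_apply (hσ : IsMinTwoFactor G σ) (hu : ¬AType G σ u)
    (hv : ¬AType G σ (σ u)) {x : V} (hx : ¬σ.SameCycle u x) :
    (¬G.Adj u x ∧ ¬G.Adj (σ u) x) ∨ (¬G.Adj u (σ x) ∧ ¬G.Adj (σ u) (σ x)) := by
  by_contra! h
  obtain ⟨h1, h2⟩ := h
  by_cases hux : G.Adj u x <;> by_cases huσx : G.Adj u (σ x)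
  · exact hu ⟨x, hx, hux, huσx⟩
  · exact hσ.not_adj_of_two_exchange (by simpa using hx) (Or.inl rfl) (Or.inr rfl) hux
      (h2 huσx).symm
  · exact hσ.not_adj_of_two_exchange hx (Or.inl rfl) (Or.inl rfl) huσx (h1 hux).symm
  · exact hv ⟨x, by rwa [sameCycle_apply_left], h1 hux, h2 huσx⟩

theorem IsMinTwoFactor.card_add_six_le_three_mul_card_sameCycle [DecidableEq V]
    (h2 : TwoK2Free G) (ht : Tough 2 G) (hσ : IsMinTwoFactor G σ) (hcyc : 1 < numCycles σ)
    (hu : ¬AType G σ u) (hv : ¬AType G σ (σ u)) :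
    Fintype.card V + 6 ≤ 3 * #{x | σ.SameCycle u x} := by
  classical
  set T : Finset V := {x | ¬G.Adj u x ∧ ¬G.Adj (σ u) x}
  have hcover : ∀ x ∈ ({x | ¬σ.SameCycle u x} : Finset V), x ∈ T ∨ σ x ∈ T := fun x hx => by
    simpa [T] using hσ.nonadj_or_nonadj_apply hu hv (mem_filter.1 hx).2
  have hT : T.Nonempty := by
    obtain ⟨x, hx⟩ : ∃ x, ¬σ.SameCycle u x := by
      obtain ⟨a, b, hab⟩ := exists_not_sameCycle_of_one_lt_numCycles hσ.1.apply_ne hcyc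
      by_contra! h
      exact hab ((h a).symm.trans (h b))
    rcases hcover x (by simpa using hx) with h | h
    exacts [⟨_, h⟩, ⟨_, h⟩]
  have huT : u ∉ T := by simp [T, (hσ.1 u).1.symm]
  have hI := ht.three_mul_card_le (I := insert u T)
    (by simpa [T] using h2.isIndepSet_insert (hσ.1 u).1)
    (by rw [card_insert_of_notMem huT]; have := hT.card_pos; omega)
  rw [card_insert_of_notMem huT] at hI
  have hsplit : #{x | σ.SameCycle u x} + #{x | ¬σ.SameCycle u x} = Fintype.card V := by
    rw [card_filter_add_card_filter_not, card_univ]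
  have hout := card_le_two_mul_card_of_forall_mem_or_apply_mem σ hcover
  omega

end Bound

theorem exists_cover_by_two_classes {α : Type*} [Fintype α] [Nonempty α] {r : α → α → Prop}
    [DecidableRel r] (hr : Equivalence r) {P : α → Prop}
    (hP : ∀ y, P y → Fintype.card α < 3 * #{x | r y x}) :
    ∃ x₁ x₂, ∀ y, P y → r x₁ y ∨ r x₂ y := by
  classical
  by_cases h₁ : ∃ y₁, P y₁
  swap
  · simp only [not_exists] at h₁
    exact ⟨Classical.arbitrary α, Classical.arbitrary α, fun y hy => (h₁ y hy).elim⟩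
  obtain ⟨y₁, hy₁⟩ := h₁
  by_cases h₂ : ∃ y₂, P y₂ ∧ ¬r y₁ y₂
  swap
  · simp only [not_exists, not_and, not_not] at h₂
    exact ⟨y₁, y₁, fun y hy => Or.inl (h₂ y hy)⟩
  obtain ⟨y₂, hy₂, h12⟩ := h₂
  refine ⟨y₁, y₂, fun y hy => ?_⟩
  by_contra! h
  have hdisj : ∀ {a b}, ¬r a b → Disjoint ({x | r a x} : Finset α) ({x | r b x} : Finset α) :=
    fun hab => disjoint_filter.2 fun x _ hax hbx => hab (hr.trans hax (hr.symm hbx))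
  have hcard := card_le_univ
    (({x | r y₁ x} : Finset α) ∪ ({x | r y₂ x} : Finset α) ∪ ({x | r y x} : Finset α))
  rw [card_union_of_disjoint (disjoint_union_left.2 ⟨hdisj h.1, hdisj h.2⟩),
    card_union_of_disjoint (hdisj h12)] at hcard
  have := hP _ hy₁
  have := hP _ hy₂
  have := hP _ hy
  omega

theorem stmt11 {V : Type*} [Fintype V] (G : SimpleGraph V) (h2 : TwoK2Free G)
    (ht : Tough 2 G) (σ : Equiv.Perm V) (hσ : IsMinTwoFactor G σ)
    (hcyc : 1 < numCycles σ) :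
    ∃ x₁ x₂ : V, ∀ y : V,
      ¬ (AType G σ y ↔ ¬ AType G σ (σ y)) →
      σ.SameCycle x₁ y ∨ σ.SameCycle x₂ y := by
  classical
  obtain ⟨a, -⟩ := exists_not_sameCycle_of_one_lt_numCycles hσ.1.apply_ne hcyc
  have : Nonempty V := ⟨a⟩
  refine exists_cover_by_two_classes (SameCycle.equivalence σ) fun y hy => ?_
  have hB : ¬AType G σ y ∧ ¬AType G σ (σ y) := by
    have := hσ.not_aType_and_aType_apply h2 y
    tauto
  have := hσ.card_add_six_le_three_mul_card_sameCycle h2 ht hcyc hB.1 hB.2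
  omega
end
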